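/- Let n ≥ 2, M = Mₙ the n-fuse function, and tᵢ as usual. For every 1 ≤ i ≤ n, every x, and every 0 ≤ d < tᵢ(x)/i, we have tᵢ(x+d) = tᵢ(x) − d·i. -/
import Mathlib


/-- Auxiliary values of the `n`-fuse function: `t₀(x) = 1`,
`t_{i+1}(x) = M(x - tᵢ(x))`. -/
def tfun (M : ℝ → ℝ) (x : ℝ) : ℕ → ℝ
  | 0 => 1
  | i + 1 => M (x - tfun M x i)

namespace MnAux

/-- Local linearity of `M` at `y`. -/
def Pp (M : ℝ → ℝ) (y : ℝ) : Prop :=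
  ∀ e : ℝ, 0 ≤ e → e < M y → M (y + e) = M y - e

lemma tfun_succ (M : ℝ → ℝ) (x : ℝ) (j : ℕ) :
    tfun M x (j + 1) = M (x - tfun M x j) := rfl

lemma tpos {M : ℝ → ℝ} (hpos : ∀ x : ℝ, 0 < M x) (x : ℝ) :
    ∀ j : ℕ, 0 < tfun M x j
  | 0 => one_pos
  | _ + 1 => hpos _

lemma tneg {M : ℝ → ℝ} (hneg : ∀ x : ℝ, x < 0 → M x = -x) :
    ∀ (j : ℕ) (x : ℝ), x ≤ 0 → tfun M x j = 1 - j * x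
  | 0, x, _ => by simp [tfun]
  | j + 1, x, hx => by
      have hj := tneg hneg j x hx
      have hj0 : (0:ℝ) ≤ (j:ℝ) := by positivity
      have harg : x - tfun M x j < 0 := by
        rw [hj]; nlinarith
      rw [tfun_succ, hneg _ harg, hj]
      push_cast; ring

lemma Pneg {M : ℝ → ℝ} (hneg : ∀ x : ℝ, x < 0 → M x = -x)
    (y : ℝ) (hy : y < 0) : Pp M y := by
  intro e he0 heM
  have hMy : M y = -y := hneg y hy
  have h2 : y + e < 0 := by rw [hMy] at heM; linarith
  rw [hneg _ h2, hMy]; ring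

lemma Lstep {M : ℝ → ℝ} (hpos : ∀ x : ℝ, 0 < M x)
    (x : ℝ) (Hloc : ∀ w, w < x → Pp M w) (j : ℕ) :
    tfun M x (j + 1) ≤ tfun M x j + M x := by
  have htpos : 0 < tfun M x j := tpos hpos x j
  have hz : x - tfun M x j < x := by linarith
  rw [tfun_succ]
  by_cases hM : M (x - tfun M x j) ≤ tfun M x j
  · have := hpos x; linarith
  · push_neg at hM
    have h := Hloc (x - tfun M x j) hz (tfun M x j) htpos.le hM
    have hxx : x - tfun M x j + tfun M x j = x := by ring
    rw [hxx] at h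
    linarith

lemma chainL {M : ℝ → ℝ} (hpos : ∀ x : ℝ, 0 < M x)
    (x : ℝ) (Hloc : ∀ w, w < x → Pp M w) :
    ∀ (j k : ℕ), tfun M x (k + j) ≤ tfun M x k + j * M x
  | 0, k => by simp
  | j + 1, k => by
      have h1 := chainL hpos x Hloc j k
      have h2 := Lstep hpos x Hloc (k + j)
      have hkj : k + (j + 1) = (k + j) + 1 := rfl
      rw [hkj]
      push_cast
      nlinarith [hpos x]

/-- `t_k(x) ≥ k · M x` for `0 ≤ x`, `k ≤ n`. -/
lemma monoLem {n : ℕ} {M : ℝ → ℝ} (hn : 2 ≤ n)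
    (heq : ∀ x : ℝ, 0 ≤ x → M x = tfun M x n / n)
    (hpos : ∀ x : ℝ, 0 < M x)
    (x : ℝ) (hx : 0 ≤ x) (Hloc : ∀ w, w < x → Pp M w) :
    ∀ k : ℕ, k ≤ n → (k:ℝ) * M x ≤ tfun M x k := by
  intro k hk
  have hn0 : (0:ℝ) < n := by
    have : 0 < n := by omega
    exact_mod_cast this
  have htn : tfun M x n = n * M x := by
    rw [heq x hx]; field_simp
  have h1 := chainL hpos x Hloc (n - k) k
  rw [Nat.add_sub_cancel' hk] at h1
  rw [htn] at h1
  have hcast : ((n - k : ℕ):ℝ) = (n:ℝ) - k := by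
    rw [Nat.cast_sub hk]
  rw [hcast] at h1
  linarith

lemma linchain {M : ℝ → ℝ} (hpos : ∀ x : ℝ, 0 < M x)
    (x d : ℝ) (hd0 : 0 ≤ d) (Hloc : ∀ w, w < x → Pp M w) :
    ∀ k : ℕ, (∀ j : ℕ, 1 ≤ j → j ≤ k → (j:ℝ) * d < tfun M x j) →
      tfun M (x + d) k = tfun M x k - d * k
  | 0, _ => by simp [tfun]
  | k + 1, hb => by
      have ih := linchain hpos x d hd0 Hloc k
        (fun j h1 h2 => hb j h1 (h2.trans (Nat.le_succ k)))
      have ht : 0 < tfun M x k := tpos hpos x k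
      have hlt : x - tfun M x k < x := by linarith
      have harg : (x + d) - tfun M (x + d) k
          = (x - tfun M x k) + d * ((k:ℝ) + 1) := by
        rw [ih]; push_cast; ring
      have hdisp : 0 ≤ d * ((k:ℝ) + 1) := by positivity
      have hbound : d * ((k:ℝ) + 1) < M (x - tfun M x k) := by
        have h := hb (k + 1) (by omega) le_rfl
        rw [tfun_succ] at h
        push_cast at h
        linarith
      have h := Hloc _ hlt (d * ((k:ℝ) + 1)) hdisp hbound
      rw [tfun_succ, harg, h, tfun_succ M x k]
      push_cast; ring

/-- The key lemma: `M` is locally linear with slope `-1` everywhere. -/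
lemma Pall {n : ℕ} {M : ℝ → ℝ} (hn : 2 ≤ n)
    (hneg : ∀ x : ℝ, x < 0 → M x = -x)
    (heq : ∀ x : ℝ, 0 ≤ x → M x = tfun M x n / n)
    (hpos : ∀ x : ℝ, 0 < M x) :
    ∀ y : ℝ, Pp M y := by
  have hn0 : (0:ℝ) < n := by
    have : 0 < n := by omega
    exact_mod_cast this
  have htn : ∀ x : ℝ, 0 ≤ x → tfun M x n = n * M x := by
    intro x hx; rw [heq x hx]; field_simp
  have step : ∀ m : ℝ, 0 ≤ m → (∀ w, w < m → Pp M w) → Pp M m := by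
    intro m hm0 H e he0 heM
    have hb : ∀ j : ℕ, 1 ≤ j → j ≤ n → (j:ℝ) * e < tfun M m j := by
      intro j h1 h2
      have hj1 : (1:ℝ) ≤ (j:ℝ) := by exact_mod_cast h1
      have hmono := monoLem hn heq hpos m hm0 H j h2
      nlinarith
    have hlin := linchain hpos m e he0 H n hb
    have hme : (0:ℝ) ≤ m + e := by linarith
    have h2 := heq (m + e) hme
    rw [hlin, htn m hm0] at h2
    rw [h2, heq m hm0]
    field_simp
  have cover : ∀ u : ℝ, Pp M u → ∀ g : ℝ, 0 ≤ g → g < M u → Pp M (u + g) := by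
    intro u hu g hg0 hgM e he0 heM
    have h1 : M (u + g) = M u - g := hu g hg0 hgM
    have h2 : g + e < M u := by rw [h1] at heM; linarith
    have h3 := hu (g + e) (by linarith) h2
    have h4 : u + g + e = u + (g + e) := by ring
    rw [h4, h3, h1]; ring
  by_contra hcon
  rw [not_forall] at hcon
  obtain ⟨y₀, hy₀⟩ := hcon
  set B : Set ℝ := {y | ¬ Pp M y} with hB
  have hBne : B.Nonempty := ⟨y₀, hy₀⟩
  have hBlb : ∀ y ∈ B, (0:ℝ) ≤ y := by
    intro y hy
    by_contra hc
    push_neg at hc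
    exact hy (Pneg hneg y hc)
  have hbdd : BddBelow B := ⟨0, fun y hy => hBlb y hy⟩
  have hm0 : 0 ≤ sInf B := le_csInf hBne hBlb
  have hHm : ∀ w, w < sInf B → Pp M w := by
    intro w hw
    by_contra hc
    exact absurd (csInf_le hbdd hc) (not_le.mpr hw)
  have hPm : Pp M (sInf B) := step (sInf B) hm0 hHm
  have hlb2 : ∀ b ∈ B, sInf B + M (sInf B) ≤ b := by
    intro b hb
    by_contra hc
    push_neg at hc
    have hmb : sInf B ≤ b := csInf_le hbdd hb
    have hPb : Pp M b := by
      have hbm : b = sInf B + (b - sInf B) := by ring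
      rw [hbm]
      exact cover (sInf B) hPm (b - sInf B) (by linarith) (by linarith)
    exact hb hPb
  have hfin : sInf B + M (sInf B) ≤ sInf B := le_csInf hBne hlb2
  have := hpos (sInf B)
  linarith

end MnAux

/-- For the total, positive-valued `n`-fuse function `Mₙ`: for every
`1 ≤ i ≤ n`, every `x`, and every `0 ≤ d < tᵢ(x)/i`, we have
`tᵢ(x+d) = tᵢ(x) − d·i`. -/
theorem Mn_t_linear (n : ℕ) (hn : 2 ≤ n) (M : ℝ → ℝ)
    (hneg : ∀ x : ℝ, x < 0 → M x = -x)
    (heq : ∀ x : ℝ, 0 ≤ x → M x = tfun M x n / n)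
    (hpos : ∀ x : ℝ, 0 < M x)
    (i : ℕ) (hi1 : 1 ≤ i) (hi2 : i ≤ n) (x d : ℝ)
    (hd0 : 0 ≤ d) (hd : d < tfun M x i / (i : ℝ)) :
    tfun M (x + d) i = tfun M x i - d * i := by
  have R := MnAux.Pall hn hneg heq hpos
  have hi0 : (0:ℝ) < (i:ℝ) := by
    have : 0 < i := hi1
    exact_mod_cast this
  have hdi : d * (i:ℝ) < tfun M x i := (lt_div_iff₀ hi0).mp hd
  have Hloc : ∀ w, w < x → MnAux.Pp M w := fun w _ => R w
  have hb : ∀ j : ℕ, 1 ≤ j → j ≤ i → (j:ℝ) * d < tfun M x j := by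
    intro j h1 h2
    have hj1 : (1:ℝ) ≤ (j:ℝ) := by exact_mod_cast h1
    have hji : (j:ℝ) ≤ (i:ℝ) := by exact_mod_cast h2
    rcases lt_or_ge x 0 with hx | hx
    · rw [MnAux.tneg hneg j x hx.le]
      rw [MnAux.tneg hneg i x hx.le] at hdi
      nlinarith
    · have hmono := MnAux.monoLem hn heq hpos x hx Hloc j (h2.trans hi2)
      have hchain := MnAux.chainL hpos x Hloc (i - j) j
      rw [Nat.add_sub_cancel' h2] at hchain
      have hcast : ((i - j : ℕ):ℝ) = (i:ℝ) - j := by rw [Nat.cast_sub h2]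
      rw [hcast] at hchain
      -- j * d * i < j * t_i ≤ j * t_j + j*(i-j)*Mx ≤ j*t_j + (i-j)*t_j = i*t_j
      nlinarith [hpos x, mul_le_mul_of_nonneg_left hchain (by linarith : (0:ℝ) ≤ (j:ℝ)),
        mul_lt_mul_of_pos_left hdi (by linarith : (0:ℝ) < (j:ℝ)),
        mul_le_mul_of_nonneg_left hmono (by linarith : (0:ℝ) ≤ (i:ℝ) - (j:ℝ))]
  have := MnAux.linchain hpos x d hd0 Hloc i hb
  rw [this]
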